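/- A permutation π has reversal distance at most 1 from the identity if and only if π avoids all three of the patterns 2143, 231 and 312; that is, B_1^{rd} = Av(2143, 231, 312). -/

import Mathlib

/-! ## Basic definitions: permutations as lists, reversals, distances -/

/-- Decorations for peg permutations: `+`, `-`, `•`. -/
inductive Deco where
  | plus : Deco
  | minus : Deco
  | dot : Deco
deriving DecidableEq, Repr

/-- A peg permutation: a list of entries together with decorations. -/
abbrev PegPerm := List (ℕ × Deco)

def pegDefault : ℕ × Deco := (0, Deco.dot)

/-- The identity permutation `1 2 ⋯ n` as a list. -/
def idPerm (n : ℕ) : List ℕ := List.range' 1 n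

/-- A list of naturals is a permutation (of `1,…,n` where `n` is its length). -/
def IsPermList (π : List ℕ) : Prop := π.Perm (idPerm π.length)

/-- Reverse the segment of a list from (0-indexed) position `i` to `j` inclusive. -/
def segReverse {α : Type*} (l : List α) (i j : ℕ) : List α :=
  l.take i ++ ((l.drop i).take (j + 1 - i)).reverse ++ l.drop (j + 1)

/-- One reversal step on permutations (reverse a segment of length at least 2). -/
def RevStep (l l' : List ℕ) : Prop :=
  ∃ i j, i < j ∧ j < l.length ∧ l' = segReverse l i j

/-- One prefix reversal step on permutations (reverse a prefix of length at least 2). -/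
def PrefRevStep (l l' : List ℕ) : Prop :=
  ∃ j, 0 < j ∧ j < l.length ∧ l' = segReverse l 0 j

/-- Reachability in exactly `k` steps of the step relation `step`. -/
def ReachIn {α : Type*} (step : α → α → Prop) : ℕ → α → α → Prop
  | 0, x, y => x = y
  | k + 1, x, y => ∃ z, step x z ∧ ReachIn step k z y

/-- The reversal distance of a permutation from the identity. -/
noncomputable def rd (π : List ℕ) : ℕ :=
  sInf {k | ReachIn RevStep k π (idPerm π.length)}

/-- The prefix reversal distance of a permutation from the identity. -/
noncomputable def prd (π : List ℕ) : ℕ :=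
  sInf {k | ReachIn PrefRevStep k π (idPerm π.length)}

/-- The ball of radius `k` in the reversal model. -/
def Brd (k : ℕ) : Set (List ℕ) := {π | IsPermList π ∧ rd π ≤ k}

/-- The ball of radius `k` in the prefix reversal model. -/
def Bprd (k : ℕ) : Set (List ℕ) := {π | IsPermList π ∧ prd π ≤ k}

/-! ## Peg permutations: oriented reversals and distances -/

def flipDeco : Deco → Deco
  | Deco.plus => Deco.minus
  | Deco.minus => Deco.plus
  | Deco.dot => Deco.dot

/-- Oriented reversal of the segment from position `i` to `j` (0-indexed) of a peg
permutation: the segment is reversed and the decorations `+`, `-` are swapped. -/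
def pegSegReverse (l : PegPerm) (i j : ℕ) : PegPerm :=
  l.take i ++ (((l.drop i).take (j + 1 - i)).map (fun p => (p.1, flipDeco p.2))).reverse
    ++ l.drop (j + 1)

/-- One oriented reversal step on peg permutations. -/
def PegRevStep (l l' : PegPerm) : Prop :=
  ∃ i j, i ≤ j ∧ j < l.length ∧ l' = pegSegReverse l i j

/-- One oriented prefix reversal step on peg permutations. -/
def PegPrefRevStep (l l' : PegPerm) : Prop :=
  ∃ j, j < l.length ∧ l' = pegSegReverse l 0 j

/-- The underlying list of a peg permutation is a permutation. -/
def IsPegPermList (l : PegPerm) : Prop := IsPermList (l.map Prod.fst)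

/-- An identity peg permutation: underlying identity, every decoration `+` or `•`. -/
def IsIdPeg (l : PegPerm) : Prop :=
  l.map Prod.fst = idPerm l.length ∧ ∀ p ∈ l, p.2 ≠ Deco.minus

/-- The reversal distance of a peg permutation from an identity peg permutation. -/
noncomputable def pegRd (l : PegPerm) : ℕ :=
  sInf {k | ∃ m, IsIdPeg m ∧ ReachIn PegRevStep k l m}

/-- The prefix reversal distance of a peg permutation from an identity peg permutation. -/
noncomputable def pegPrd (l : PegPerm) : ℕ :=
  sInf {k | ∃ m, IsIdPeg m ∧ ReachIn PegPrefRevStep k l m}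

/-- The ball of radius `k` of peg permutations in the reversal model. -/
def PegBrd (k : ℕ) : Set PegPerm := {l | IsPegPermList l ∧ pegRd l ≤ k}

/-- The ball of radius `k` of peg permutations in the prefix reversal model. -/
def PegBprd (k : ℕ) : Set PegPerm := {l | IsPegPermList l ∧ pegPrd l ≤ k}

/-! ## Patterns -/

/-- Two lists of the same length are order-isomorphic. -/
def OrderIsoList (s t : List ℕ) : Prop :=
  s.length = t.length ∧
  ∀ i j, i < s.length → j < s.length → (s.getD i 0 < s.getD j 0 ↔ t.getD i 0 < t.getD j 0)

/-- `σ` is a (classical) pattern of `τ`. -/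
def IsPattern (σ τ : List ℕ) : Prop :=
  ∃ s, s.Sublist τ ∧ OrderIsoList s σ

/-- `σ` is a peg pattern of `τ`: some subsequence of `τ` is order-isomorphic to `σ`
and whenever an entry of the subsequence is decorated `+` (resp. `-`), the
corresponding entry of `σ` is decorated `+` (resp. `-`). -/
def IsPegPattern (σ τ : PegPerm) : Prop :=
  ∃ s : PegPerm, s.Sublist τ ∧ OrderIsoList (s.map Prod.fst) (σ.map Prod.fst) ∧
    ∀ i, i < s.length →
      ((s.getD i pegDefault).2 = Deco.plus → (σ.getD i pegDefault).2 = Deco.plus) ∧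
      ((s.getD i pegDefault).2 = Deco.minus → (σ.getD i pegDefault).2 = Deco.minus)

/-! ## Strips, clean compact and compact peg permutations -/

/-- Two adjacent entries of a peg permutation lie in a common strip. -/
def StripPair (p q : ℕ × Deco) : Prop :=
  (q.1 = p.1 + 1 ∧ p.2 ≠ Deco.minus ∧ q.2 ≠ Deco.minus) ∨
  (p.1 = q.1 + 1 ∧ p.2 ≠ Deco.plus ∧ q.2 ≠ Deco.plus)

/-- A peg permutation is clean compact when all its strips have length 1, i.e. no two
adjacent entries lie in a common strip. -/
def CleanCompact (l : PegPerm) : Prop :=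
  ∀ i, i + 1 < l.length → ¬ StripPair (l.getD i pegDefault) (l.getD (i + 1) pegDefault)

/-- A peg permutation is compact when every strip has length 1 or consists
exclusively of entries decorated `•`. -/
def CompactPeg (l : PegPerm) : Prop :=
  ∀ i, i + 1 < l.length → StripPair (l.getD i pegDefault) (l.getD (i + 1) pegDefault) →
    (l.getD i pegDefault).2 = Deco.dot ∧ (l.getD (i + 1) pegDefault).2 = Deco.dot

/-! ## The clean compact peg permutation `peg(γ)` associated with a permutation -/

/-- The decomposition of a permutation into maximal monotone strips of adjacent values. -/
def stripGroups (γ : List ℕ) : List (List ℕ) :=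
  γ.splitBy (fun a b => b == a + 1 || a == b + 1)

def stripMin (s : List ℕ) : ℕ := s.foldr min (s.headD 0)

def stripDeco (s : List ℕ) : Deco :=
  if s.length ≤ 1 then Deco.dot
  else if s.headD 0 < s.getLastD 0 then Deco.plus
  else Deco.minus

/-- Rank of `v` among `vals` (used for rescaling). -/
def rankIn (vals : List ℕ) (v : ℕ) : ℕ := (vals.filter (fun w => w ≤ v)).length

/-- The clean compact peg permutation associated with a permutation: replace each
strip by its minimum, decorated `+`/`-`/`•` according to the kind of strip, and rescale. -/
def pegOf (γ : List ℕ) : PegPerm :=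
  (stripGroups γ).map (fun s => (rankIn ((stripGroups γ).map stripMin) (stripMin s), stripDeco s))

/-! ## Monotone inflations and grid classes -/

/-- A legal inflation vector for a peg permutation. -/
def LegalVec (πε : PegPerm) (v : List ℕ) : Prop :=
  v.length = πε.length ∧
  ∀ i, i < πε.length → (πε.getD i pegDefault).2 = Deco.dot → v.getD i 0 ≤ 1

/-- The values of the `i`-th block of the monotone inflation of `πε` through `v`:
an increasing (resp. decreasing) run of `vᵢ` values, occupying the interval of values
determined by the relative order of the entries of `πε`. -/
def blockVals (πε : PegPerm) (v : List ℕ) (i : ℕ) : List ℕ :=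
  let off := (((List.range πε.length).filter
      (fun j => (πε.getD j pegDefault).1 < (πε.getD i pegDefault).1)).map
      (fun j => v.getD j 0)).sum
  if (πε.getD i pegDefault).2 = Deco.minus then (List.range' (off + 1) (v.getD i 0)).reverse
  else List.range' (off + 1) (v.getD i 0)

/-- The monotone inflation `πε[v]`. -/
def inflate (πε : PegPerm) (v : List ℕ) : List ℕ :=
  ((List.range πε.length).map (blockVals πε v)).flatten

/-- The grid class of a peg permutation: all its monotone inflations through legal
inflation vectors. -/
def GridOf (πε : PegPerm) : Set (List ℕ) :=
  {γ | ∃ v, LegalVec πε v ∧ γ = inflate πε v}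

/-- Compatibility of decorations in peg monotone inflations: a `+` entry is inflated by
an identity peg permutation (decorations `+`/`•`), a `-` entry by a reverse identity peg
permutation (decorations `-`/`•`), a `•` entry stays `•`. -/
def DecoOK : Deco → Deco → Prop
  | Deco.plus, d => d ≠ Deco.minus
  | Deco.minus, d => d ≠ Deco.plus
  | Deco.dot, d => d = Deco.dot

/-- The peg grid class of a peg permutation: all its peg monotone inflations. -/
def GridPegOf (πε : PegPerm) : Set PegPerm :=
  {γ | ∃ v, LegalVec πε v ∧ ∃ bs : List PegPerm,
    bs.length = πε.length ∧ γ = bs.flatten ∧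
    ∀ i, i < πε.length →
      (bs.getD i []).map Prod.fst = blockVals πε v i ∧
      ∀ p ∈ bs.getD i [], DecoOK (πε.getD i pegDefault).2 p.2}

/-! ## The inflation `π^ε_I` and the permutation `π̃^ε_I` -/

/-- Canonical peg inflation: every inflated entry keeps the decoration of the
original one. -/
def pegInflate (πε : PegPerm) (v : List ℕ) : PegPerm :=
  ((List.range πε.length).map
    (fun i => (blockVals πε v i).map (fun x => (x, (πε.getD i pegDefault).2)))).flatten

/-- The inflation vector associated with the multiset `I = {i, j}` (0-indexed):
entries `i` and `j` are inflated by one more element each. -/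
def inflVec (n i j : ℕ) : List ℕ :=
  (List.range n).map (fun l => 1 + (if l = i then 1 else 0) + (if l = j then 1 else 0))

/-- `π^ε_I` where `I = {i, j}` with `i ≤ j` 0-indexed. -/
def pegI (πε : PegPerm) (i j : ℕ) : PegPerm := pegInflate πε (inflVec πε.length i j)

/-- `π̃^ε_I`: the result of applying to `π^ε_I` the oriented reversal of the segment
of (0-indexed) positions `i+1, …, j+1`. -/
def pegITilde (πε : PegPerm) (i j : ℕ) : PegPerm := pegSegReverse (pegI πε i j) (i + 1) (j + 1)

/-! ## Clean compact peg bases -/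

/-- The clean compact peg basis of a set `B` of peg permutations: the clean compact
peg permutations not in `B` all of whose proper clean compact peg patterns are in `B`. -/
def CCPegBasis (B : Set PegPerm) : Set PegPerm :=
  {πε | IsPegPermList πε ∧ CleanCompact πε ∧ πε ∉ B ∧
    ∀ γ, IsPegPermList γ → CleanCompact γ → IsPegPattern γ πε → γ ≠ πε → γ ∈ B}

/-! ## The exceptional peg permutations for the prefix reversal model -/

/-- `Θ_e(n)` for even `n`:  `n• (n−2)• ⋯ 4• 2• 1⁺ 3• ⋯ (n−3)• (n−1)•`. -/
def ThetaE (n : ℕ) : PegPerm :=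
  ((List.range (n / 2)).map (fun i => (n - 2 * i, Deco.dot))) ++ [(1, Deco.plus)] ++
  ((List.range (n / 2 - 1)).map (fun i => (3 + 2 * i, Deco.dot)))

/-- `Θ_o(n)` for odd `n`:  `n• (n−2)• ⋯ 3• 1⁻ 2• 4• ⋯ (n−3)• (n−1)•`. -/
def ThetaO (n : ℕ) : PegPerm :=
  ((List.range ((n - 1) / 2)).map (fun i => (n - 2 * i, Deco.dot))) ++ [(1, Deco.minus)] ++
  ((List.range ((n - 1) / 2)).map (fun i => (2 + 2 * i, Deco.dot)))

/-- `Λ_e(n)` for even `n` and `t = n/2`:  `(t+1)⁺ t• (t+2)• (t−1)• ⋯ (n−1)• 2• n• 1•`. -/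
def LambdaE (n : ℕ) : PegPerm :=
  (List.range (n / 2)).flatMap
    (fun i => [(n / 2 + 1 + i, if i = 0 then Deco.plus else Deco.dot), (n / 2 - i, Deco.dot)])

/-- `Λ_o(n)` for odd `n` and `t = (n+1)/2`:  `t⁻ (t+1)• (t−1)• (t+2)• ⋯ (n−1)• 2• n• 1•`. -/
def LambdaO (n : ℕ) : PegPerm :=
  ((n + 1) / 2, Deco.minus) ::
    (List.range ((n + 1) / 2 - 1)).flatMap
      (fun i => [((n + 1) / 2 + 1 + i, Deco.dot), ((n + 1) / 2 - 1 - i, Deco.dot)])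

/-! Being within one reversal of the identity means having the form `A ++ B ++ C` with
`A ++ B.reverse ++ C` increasing. This form passes to subsequences, and no pattern 231, 312
or 2143 has it. Conversely, let `a :: l` avoid the three patterns. If `a` is its minimum,
induct on `l`. Otherwise the entries of `l` below `a` all precede those above it (231),
they decrease (312), and the entries above `a` increase (2143), so `a` followed by the smaller
entries is the reversed block. -/

theorem segReverse_append_append {α : Type*} {A B C : List α} {j : ℕ}
    (h : A.length + B.length = j + 1) :
    segReverse (A ++ B ++ C) A.length j = A ++ B.reverse ++ C := by
  simp [segReverse, List.drop_append, ← h]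

theorem revStep_iff {l l' : List ℕ} :
    RevStep l l' ↔
      ∃ A B C, 2 ≤ B.length ∧ l = A ++ B ++ C ∧ l' = A ++ B.reverse ++ C := by
  constructor
  · rintro ⟨i, j, hij, hj, rfl⟩
    refine ⟨l.take i, (l.drop i).take (j + 1 - i), l.drop (j + 1), by simp; omega, ?_, rfl⟩
    have hC : l.drop (j + 1) = (l.drop i).drop (j + 1 - i) := by
      rw [List.drop_drop]; congr 1; omega
    rw [hC, List.append_assoc, List.take_append_drop, List.take_append_drop]
  · rintro ⟨A, B, C, hB, rfl, rfl⟩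
    exact ⟨A.length, A.length + B.length - 1, by omega, by simp; omega,
      (segReverse_append_append (by omega)).symm⟩

theorem RevStep.append_right {l l' : List ℕ} (h : RevStep l l') (r : List ℕ) :
    RevStep (l ++ r) (l' ++ r) := by
  obtain ⟨A, B, C, hB, rfl, rfl⟩ := revStep_iff.mp h
  exact revStep_iff.mpr ⟨A, B, C ++ r, hB, by simp, by simp⟩

theorem reachIn_revStep_append_right {l l' : List ℕ} {k : ℕ} (h : ReachIn RevStep k l l')
    (r : List ℕ) : ReachIn RevStep k (l ++ r) (l' ++ r) := by
  induction k generalizing l with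
  | zero => exact congrArg (· ++ r) h
  | succ k ih =>
    obtain ⟨z, hz, hr⟩ := h
    exact ⟨z ++ r, hz.append_right r, ih hr⟩

/-- One reversal moves the maximum to the end; the rest is sorted by induction. -/
theorem exists_reachIn_revStep_range' {n : ℕ} {l : List ℕ} (hl : l.Perm (List.range' 1 n)) :
    ∃ k, ReachIn RevStep k l (List.range' 1 n) := by
  induction n generalizing l with
  | zero => exact ⟨0, hl.eq_nil⟩
  | succ m ih =>
    have hrange : List.range' 1 (m + 1) = List.range' 1 m ++ [m + 1] := by
      simp [List.range'_concat, Nat.add_comm]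
    obtain ⟨P, S, rfl⟩ := List.append_of_mem (hl.mem_iff.mpr (by simp : m + 1 ∈ _))
    have hrest : (P ++ S.reverse).Perm (List.range' 1 m) := by
      refine ((List.reverse_perm S).append_left P).trans (List.Perm.cons_inv (a := m + 1) ?_)
      exact List.perm_middle.symm.trans
        (hl.trans (hrange ▸ List.perm_append_singleton (m + 1) (List.range' 1 m)))
    obtain ⟨k, hk⟩ := ih hrest
    have hsorted := reachIn_revStep_append_right hk [m + 1]
    rw [← hrange] at hsorted
    cases S with
    | nil => exact ⟨k, by simpa using hsorted⟩
    | cons s S =>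
      refine ⟨k + 1, P ++ (S.reverse ++ [s]) ++ [m + 1], ?_, by simpa using hsorted⟩
      exact revStep_iff.mpr ⟨P, (m + 1) :: s :: S, [], by simp, by simp, by simp⟩

theorem rd_le_one_iff {π : List ℕ} (hπ : IsPermList π) :
    rd π ≤ 1 ↔ π = idPerm π.length ∨ RevStep π (idPerm π.length) := by
  -- `rd` is an `sInf`, and `sInf ∅ = 0`: the bound is only informative for sortable `π`.
  have hsortable : {k | ReachIn RevStep k π (idPerm π.length)}.Nonempty :=
    exists_reachIn_revStep_range' hπ
  constructor
  · intro h
    have hmem := Nat.sInf_mem hsortable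
    rcases Nat.le_one_iff_eq_zero_or_eq_one.mp h with h | h <;> rw [← rd, h] at hmem
    · exact Or.inl hmem
    · obtain ⟨z, hz, rfl⟩ := hmem
      exact Or.inr hz
  · rintro (h | h)
    · exact (Nat.sInf_le (show 0 ∈ _ from h)).trans zero_le_one
    · exact Nat.sInf_le ⟨_, h, rfl⟩

theorem isPattern_231_iff {τ : List ℕ} :
    IsPattern [2, 3, 1] τ ↔ ∃ a b c, [a, b, c].Sublist τ ∧ c < a ∧ a < b := by
  constructor
  · rintro ⟨s, hs, hlen, hiso⟩
    obtain ⟨a, b, c, rfl⟩ := List.length_eq_three.mp (by simpa using hlen)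
    exact ⟨a, b, c, hs, by simpa using hiso 2 0, by simpa using hiso 0 1⟩
  · rintro ⟨a, b, c, hs, h1, h2⟩
    refine ⟨[a, b, c], hs, rfl, fun i j hi hj => ?_⟩
    simp only [List.length_cons, List.length_nil] at hi hj
    interval_cases i <;> interval_cases j <;> simp <;> omega

theorem isPattern_312_iff {τ : List ℕ} :
    IsPattern [3, 1, 2] τ ↔ ∃ a b c, [a, b, c].Sublist τ ∧ b < c ∧ c < a := by
  constructor
  · rintro ⟨s, hs, hlen, hiso⟩
    obtain ⟨a, b, c, rfl⟩ := List.length_eq_three.mp (by simpa using hlen)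
    exact ⟨a, b, c, hs, by simpa using hiso 1 2, by simpa using hiso 2 0⟩
  · rintro ⟨a, b, c, hs, h1, h2⟩
    refine ⟨[a, b, c], hs, rfl, fun i j hi hj => ?_⟩
    simp only [List.length_cons, List.length_nil] at hi hj
    interval_cases i <;> interval_cases j <;> simp <;> omega

theorem isPattern_2143_iff {τ : List ℕ} :
    IsPattern [2, 1, 4, 3] τ ↔
      ∃ a b c d, [a, b, c, d].Sublist τ ∧ b < a ∧ a < d ∧ d < c := by
  constructor
  · rintro ⟨s, hs, hlen, hiso⟩
    obtain ⟨a, b, c, d, rfl⟩ : ∃ a b c d, s = [a, b, c, d] := by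
      match s, hlen with
      | [a, b, c, d], _ => exact ⟨a, b, c, d, rfl⟩
    exact ⟨a, b, c, d, hs, by simpa using hiso 1 0, by simpa using hiso 0 3,
      by simpa using hiso 3 2⟩
  · rintro ⟨a, b, c, d, hs, h1, h2, h3⟩
    refine ⟨[a, b, c, d], hs, rfl, fun i j hi hj => ?_⟩
    simp only [List.length_cons, List.length_nil] at hi hj
    interval_cases i <;> interval_cases j <;> simp <;> omega

theorem IsPattern.trans_sublist {σ τ τ' : List ℕ} (h : IsPattern σ τ)
    (hτ : τ.Sublist τ') : IsPattern σ τ' :=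
  let ⟨s, hs, hiso⟩ := h
  ⟨s, hs.trans hτ, hiso⟩

def IsOneReversalOfSorted (l : List ℕ) : Prop :=
  ∃ A B C : List ℕ, l = A ++ B ++ C ∧ (A ++ B.reverse ++ C).Pairwise (· < ·)

theorem isOneReversalOfSorted_iff {π : List ℕ} (hπ : IsPermList π) :
    IsOneReversalOfSorted π ↔ π = idPerm π.length ∨ RevStep π (idPerm π.length) := by
  constructor
  · rintro ⟨A, B, C, rfl, hsorted⟩
    have hid : A ++ B.reverse ++ C = idPerm (A ++ B ++ C).length :=
      List.Perm.eq_of_pairwise' hsorted (List.pairwise_lt_range' 1)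
        ((((List.reverse_perm B).append_left A).append_right C).trans hπ)
    by_cases hB : 2 ≤ B.length
    · exact Or.inr (revStep_iff.mpr ⟨A, B, C, hB, rfl, hid.symm⟩)
    · have hrev : B.reverse = B := by
        rcases B with _ | ⟨b, _ | ⟨b', B⟩⟩
        · rfl
        · rfl
        · simp at hB
      left
      rw [← hid, hrev]
  · rintro (h | h)
    · exact ⟨[], [], π, rfl, by rw [h]; exact List.pairwise_lt_range' 1⟩
    · obtain ⟨A, B, C, -, rfl, h⟩ := revStep_iff.mp h
      exact ⟨A, B, C, rfl, h ▸ List.pairwise_lt_range' 1⟩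

theorem IsOneReversalOfSorted.sublist {s l : List ℕ} (h : IsOneReversalOfSorted l)
    (hs : s.Sublist l) : IsOneReversalOfSorted s := by
  obtain ⟨A, B, C, rfl, hsorted⟩ := h
  obtain ⟨sAB, sC, rfl, hAB, hC⟩ := List.sublist_append_iff.mp hs
  obtain ⟨sA, sB, rfl, hA, hB⟩ := List.sublist_append_iff.mp hAB
  exact ⟨sA, sB, sC, rfl, hsorted.sublist ((hA.append hB.reverse).append hC)⟩

theorem not_isOneReversalOfSorted_231 {a b c : ℕ} (h1 : c < a) (h2 : a < b) :
    ¬ IsOneReversalOfSorted [a, b, c] := by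
  rintro ⟨A, B, C, h, hsorted⟩
  rcases A with _ | ⟨x, _ | ⟨y, _ | ⟨z, _ | _⟩⟩⟩ <;>
    rcases B with _ | ⟨x', _ | ⟨y', _ | ⟨z', _ | _⟩⟩⟩ <;> grind

theorem not_isOneReversalOfSorted_312 {a b c : ℕ} (h1 : b < c) (h2 : c < a) :
    ¬ IsOneReversalOfSorted [a, b, c] := by
  rintro ⟨A, B, C, h, hsorted⟩
  rcases A with _ | ⟨x, _ | ⟨y, _ | ⟨z, _ | _⟩⟩⟩ <;>
    rcases B with _ | ⟨x', _ | ⟨y', _ | ⟨z', _ | _⟩⟩⟩ <;> grind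

theorem not_isOneReversalOfSorted_2143 {a b c d : ℕ} (h1 : b < a) (h2 : a < d) (h3 : d < c) :
    ¬ IsOneReversalOfSorted [a, b, c, d] := by
  rintro ⟨A, B, C, h, hsorted⟩
  rcases A with _ | ⟨x, _ | ⟨y, _ | ⟨z, _ | ⟨w, _ | _⟩⟩⟩⟩ <;>
    rcases B with _ | ⟨x', _ | ⟨y', _ | ⟨z', _ | ⟨w', _ | _⟩⟩⟩⟩ <;> grind

theorem IsOneReversalOfSorted.avoids {l : List ℕ} (h : IsOneReversalOfSorted l) :
    ¬ IsPattern [2, 1, 4, 3] l ∧ ¬ IsPattern [2, 3, 1] l ∧ ¬ IsPattern [3, 1, 2] l := by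
  refine ⟨fun hp => ?_, fun hp => ?_, fun hp => ?_⟩
  · obtain ⟨a, b, c, d, hs, h1, h2, h3⟩ := isPattern_2143_iff.mp hp
    exact not_isOneReversalOfSorted_2143 h1 h2 h3 (h.sublist hs)
  · obtain ⟨a, b, c, hs, h1, h2⟩ := isPattern_231_iff.mp hp
    exact not_isOneReversalOfSorted_231 h1 h2 (h.sublist hs)
  · obtain ⟨a, b, c, hs, h1, h2⟩ := isPattern_312_iff.mp hp
    exact not_isOneReversalOfSorted_312 h1 h2 (h.sublist hs)

theorem lt_of_mem_dropWhile {a y : ℕ} {l : List ℕ} (ha : a ∉ l)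
    (h231 : ¬ IsPattern [2, 3, 1] (a :: l)) (hy : y ∈ l.dropWhile (· < a)) : a < y := by
  obtain ⟨e, E, hE⟩ := List.exists_cons_of_ne_nil (List.ne_nil_of_mem hy)
  have hEl : (e :: E).Sublist l := hE ▸ List.dropWhile_sublist _
  have hae : a < e := by
    have he := List.head?_dropWhile_not (· < a) l
    rw [hE] at he
    exact lt_of_le_of_ne (by simpa using he) (by rintro rfl; exact ha (hEl.subset (by simp)))
  rw [hE] at hy
  rcases List.mem_cons.mp hy with rfl | hy
  · exact hae
  by_contra hay
  have hyl : [e, y].Sublist l := ((List.singleton_sublist.mpr hy).cons_cons e).trans hEl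
  have hya : y < a :=
    lt_of_le_of_ne (not_lt.mp hay) (by rintro rfl; exact ha (hyl.subset (by simp)))
  exact h231 (isPattern_231_iff.mpr ⟨a, e, y, hyl.cons_cons a, hya, hae⟩)

theorem isOneReversalOfSorted_cons_of_lt {a x : ℕ} {l : List ℕ} (hl : (a :: l).Nodup)
    (hx : x ∈ l) (hxa : x < a) (h2143 : ¬ IsPattern [2, 1, 4, 3] (a :: l))
    (h231 : ¬ IsPattern [2, 3, 1] (a :: l)) (h312 : ¬ IsPattern [3, 1, 2] (a :: l)) :
    IsOneReversalOfSorted (a :: l) := by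
  obtain ⟨ha, hnd⟩ := List.nodup_cons.mp hl
  set D := l.takeWhile (· < a)
  set E := l.dropWhile (· < a)
  have hDE : l = D ++ E := List.takeWhile_append_dropWhile.symm
  have hD : ∀ y ∈ D, y < a := fun y hy => by simpa using List.mem_takeWhile_imp hy
  have hE : ∀ y ∈ E, a < y := fun y hy => lt_of_mem_dropWhile ha h231 hy
  have hDdec : D.Pairwise (· > ·) := List.pairwise_iff_forall_sublist.mpr fun {y z} hyz => by
    have hyzl := hyz.trans (List.takeWhile_sublist _)
    have hne : y ≠ z := by simpa using hyzl.nodup hnd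
    by_contra hle
    exact h312 (isPattern_312_iff.mpr
      ⟨a, y, z, hyzl.cons_cons a, by omega, hD z (hyz.subset (by simp))⟩)
  have hEinc : E.Pairwise (· < ·) := List.pairwise_iff_forall_sublist.mpr fun {y z} hyz => by
    have hxD : x ∈ D := by
      rw [hDE] at hx
      exact (List.mem_append.mp hx).resolve_right fun hxE => by have := hE x hxE; omega
    have hne : y ≠ z := by simpa using (hyz.trans (List.dropWhile_sublist _)).nodup hnd
    by_contra hle
    have hsub : [a, x, y, z].Sublist (a :: l) :=
      (hDE ▸ (List.singleton_sublist.mpr hxD).append hyz).cons_cons a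
    exact h2143 (isPattern_2143_iff.mpr
      ⟨a, x, y, z, hsub, hxa, hE z (hyz.subset (by simp)), by omega⟩)
  refine ⟨[], a :: D, E, by rw [hDE]; rfl, ?_⟩
  simp only [List.reverse_cons, List.nil_append, List.append_assoc, List.cons_append,
    List.pairwise_append, List.pairwise_reverse, List.pairwise_cons, List.mem_reverse,
    List.mem_cons, forall_eq_or_imp]
  exact ⟨hDdec, ⟨hE, hEinc⟩,
    fun d hd => ⟨hD d hd, fun e he => (hD d hd).trans (hE e he)⟩⟩

theorem isOneReversalOfSorted_of_avoids {l : List ℕ} (hl : l.Nodup)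
    (h2143 : ¬ IsPattern [2, 1, 4, 3] l) (h231 : ¬ IsPattern [2, 3, 1] l)
    (h312 : ¬ IsPattern [3, 1, 2] l) : IsOneReversalOfSorted l := by
  induction l with
  | nil => exact ⟨[], [], [], rfl, List.Pairwise.nil⟩
  | cons a l ih =>
    by_cases hmin : ∀ x ∈ l, a < x
    · have hsub := l.sublist_cons_self a
      obtain ⟨A, B, C, rfl, hsorted⟩ := ih (List.nodup_cons.mp hl).2
        (mt (·.trans_sublist hsub) h2143) (mt (·.trans_sublist hsub) h231)
        (mt (·.trans_sublist hsub) h312)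
      have hperm := ((List.reverse_perm B).append_left A).append_right C
      exact ⟨a :: A, B, C, rfl,
        List.pairwise_cons.mpr ⟨fun x hx => hmin x (hperm.subset hx), hsorted⟩⟩
    · obtain ⟨x, hx, hxa⟩ : ∃ x ∈ l, x ≤ a := by simpa using hmin
      have hxa' : x < a :=
        lt_of_le_of_ne hxa (by rintro rfl; exact (List.nodup_cons.mp hl).1 hx)
      exact isOneReversalOfSorted_cons_of_lt hl hx hxa' h2143 h231 h312

/-- `B_1^{rd} = Av(2143, 231, 312)`. -/
theorem B1_eq_Av :
    Brd 1 = {π : List ℕ | IsPermList π ∧ ¬ IsPattern [2, 1, 4, 3] π ∧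
      ¬ IsPattern [2, 3, 1] π ∧ ¬ IsPattern [3, 1, 2] π} := by
  refine Set.ext fun π => and_congr_right fun hπ => ?_
  rw [rd_le_one_iff hπ, ← isOneReversalOfSorted_iff hπ]
  exact ⟨IsOneReversalOfSorted.avoids, fun ⟨h2143, h231, h312⟩ =>
    isOneReversalOfSorted_of_avoids (hπ.nodup_iff.mpr List.nodup_range') h2143 h231 h312⟩
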